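/- For an e-coaugmented coalgebra-Galois C-extension B ⊆ P, the two notions of coaction invariants coincide: P_e^{coC} = P^{coC}, i.e., {p ∈ P | Δ_P(p) = p ⊗ e} = {b ∈ P | Δ_P(bp) = b Δ_P(p) for all p ∈ P}. -/
import Mathlib


/-!
STATEMENT 5. For an e-coaugmented coalgebra-Galois C-extension B ⊆ P the two
notions of coaction invariants coincide: {p | Δ_P(p) = p ⊗ e} = P^{coC}.
-/

open TensorProduct LinearMap

noncomputable section

namespace CGal

variable {k : Type*} [Field k]
variable {P C : Type*} [Ring P] [Algebra k P]
  [AddCommGroup C] [Module k C] [Coalgebra k C]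

/-- The coaction invariants `P^{coC}`. -/
def coinv (δ : P →ₗ[k] P ⊗[k] C) : Set P :=
  {b : P | ∀ p : P, δ (b * p) = b • δ p}

/-- `δ` is a (counital, coassociative) right `C`-coaction on `P`. -/
def IsCoaction (δ : P →ₗ[k] P ⊗[k] C) : Prop :=
  (∀ p : P, (TensorProduct.rid k P) ((lTensor P (Coalgebra.counit : C →ₗ[k] k)) (δ p)) = p) ∧
  (∀ p : P, (rTensor C δ) (δ p)
      = (TensorProduct.assoc k P C C).symm
          ((lTensor P (Coalgebra.comul : C →ₗ[k] C ⊗[k] C)) (δ p)))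

/-- The kernel of `P ⊗ P → P ⊗_B P` for `B = P^{coC}`. -/
def galRel (δ : P →ₗ[k] P ⊗[k] C) : Submodule k (P ⊗[k] P) :=
  Submodule.span k
    {x | ∃ p b p', b ∈ coinv δ ∧ x = (p * b) ⊗ₜ[k] p' - p ⊗ₜ[k] (b * p')}

/-- The lifted canonical map `~can : P ⊗ P → P ⊗ C`, `p ⊗ p' ↦ p δ(p')`. -/
def canLift (δ : P →ₗ[k] P ⊗[k] C) : P ⊗[k] P →ₗ[k] P ⊗[k] C :=
  (TensorProduct.map (LinearMap.mul' k P) LinearMap.id)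
    ∘ₗ (TensorProduct.assoc k P P C).symm.toLinearMap
    ∘ₗ (lTensor P δ)

/-- The extension `P^{coC} ⊆ P` is coalgebra-Galois. -/
def IsCGalois (δ : P →ₗ[k] P ⊗[k] C) : Prop :=
  Function.Surjective (canLift δ) ∧ LinearMap.ker (canLift δ) = galRel δ

/-- A group-like element of the coalgebra `C`. -/
def IsGrouplike (e : C) : Prop :=
  (Coalgebra.comul : C →ₗ[k] C ⊗[k] C) e = e ⊗ₜ[k] e ∧
  (Coalgebra.counit : C →ₗ[k] k) e = 1

lemma mul_smul_aux (a : P) (z : P ⊗[k] C) :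
    (TensorProduct.map (LinearMap.mul' k P) LinearMap.id)
      ((TensorProduct.assoc k P P C).symm (a ⊗ₜ[k] z)) = a • z := by
  induction z using TensorProduct.induction_on with
  | zero => simp
  | tmul x c => simp [smul_tmul', smul_eq_mul]
  | add x y hx hy => simp [tmul_add, hx, hy]

lemma canLift_tmul (δ : P →ₗ[k] P ⊗[k] C) (a p : P) :
    canLift δ (a ⊗ₜ[k] p) = a • δ p := by
  simp [canLift, mul_smul_aux]

theorem ecoinvariants_eq_coinvariants
    (δ : P →ₗ[k] P ⊗[k] C) (hδ : IsCoaction δ)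
    (e : C) (he : IsGrouplike (k := k) e) (hcoaug : δ 1 = (1 : P) ⊗ₜ[k] e)
    (hGal : IsCGalois δ) :
    {p : P | δ p = p ⊗ₜ[k] e} = coinv δ := by
  ext p
  constructor
  · intro hp q
    -- `1 ⊗ p - p ⊗ 1 ∈ ker canLift`
    have hker : (1 : P) ⊗ₜ[k] p - p ⊗ₜ[k] (1 : P) ∈ LinearMap.ker (canLift δ) := by
      rw [LinearMap.mem_ker, map_sub, canLift_tmul, canLift_tmul, hp, hcoaug,
        one_smul, smul_tmul', smul_eq_mul, mul_one, sub_self]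
    -- push into galRel, multiply on the right in the second factor, come back
    have hrel : (1 : P) ⊗ₜ[k] p - p ⊗ₜ[k] (1 : P) ∈ galRel δ := hGal.2 ▸ hker
    have hmap : (1 : P) ⊗ₜ[k] (p * q) - p ⊗ₜ[k] ((1 : P) * q) ∈ galRel δ := by
      have := Submodule.mem_map_of_mem (f := lTensor P (LinearMap.mulRight k q)) hrel
      have hle : (galRel δ).map (lTensor P (LinearMap.mulRight k q)) ≤ galRel δ := by
        rw [galRel, Submodule.map_span, Submodule.span_le]
        rintro _ ⟨x, ⟨a, b, c, hb, rfl⟩, rfl⟩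
        refine Submodule.subset_span ⟨a, b, c * q, hb, ?_⟩
        simp [mul_assoc]
      have hx : lTensor P (LinearMap.mulRight k q) ((1 : P) ⊗ₜ[k] p - p ⊗ₜ[k] (1 : P))
          = (1 : P) ⊗ₜ[k] (p * q) - p ⊗ₜ[k] ((1 : P) * q) := by
        simp
      exact hle (hx ▸ this)
    have hker2 : (1 : P) ⊗ₜ[k] (p * q) - p ⊗ₜ[k] ((1 : P) * q)
        ∈ LinearMap.ker (canLift δ) := hGal.2.symm ▸ hmap
    have := LinearMap.mem_ker.mp hker2
    rw [map_sub, sub_eq_zero, canLift_tmul, canLift_tmul, one_smul, one_mul] at this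
    exact this
  · intro hp
    have := hp 1
    rw [mul_one, hcoaug, smul_tmul', smul_eq_mul, mul_one] at this
    exact this

end CGal
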